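/- Let h, g ∈ hS_* satisfy ‖P(g) − P(h)‖_∞ ≤ (1/2) · max(‖P(h)‖_∞, ‖P(g)‖_∞). Then for all p, q ∈ [1, ∞]: d_p(CL(h), CL(g)) ≤ 7 (KS)^{1/p} · min(‖P(h)‖_∞^{1/K − 1}, ‖P(g)‖_∞^{1/K − 1}) · ‖P(h) − P(g)‖_q. -/

import Mathlib

open scoped BigOperators ENNReal
open Finset

/-- Parameters of the network: `K` vectors in `ℝ^S`. -/
abbrev Params (K S : ℕ) := Fin K → Fin S → ℝ

/-- Order-`K` tensors with all sides of size `S`. -/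
abbrev Tensor (K S : ℕ) := (Fin K → Fin S) → ℝ

/-- The Segre map: `P(h)_{i_1,…,i_K} = h_{1,i_1} ⋯ h_{K,i_K}`. -/
noncomputable def Segre {K S : ℕ} (h : Params K S) : Tensor K S :=
  fun i => ∏ k, h k (i k)

/-- Parameters with all components nonzero. -/
def hSstar (K S : ℕ) : Set (Params K S) := {h | ∀ k, h k ≠ 0}

/-- The rescaling equivalence class of `h` (product of scales equal to `1`). -/
def CL {K S : ℕ} (h : Params K S) : Set (Params K S) :=
  {g | ∃ lam : Fin K → ℝ, (∏ k, lam k) = 1 ∧ ∀ k, g k = lam k • h k}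

/-- Sup norm on `ℝ^S`. -/
noncomputable def supnorm {S : ℕ} (x : Fin S → ℝ) : ℝ := ⨆ i, |x i|

/-- Parameters in `hSstar` whose components all have the same sup norm. -/
def hSdiag (K S : ℕ) : Set (Params K S) :=
  hSstar K S ∩ {h | ∀ k k' : Fin K, supnorm (h k) = supnorm (h k')}

/-- Entrywise `ℓ^p` norm, `p ∈ [1,∞]`. -/
noncomputable def pnorm (p : ℝ≥0∞) {ι : Type*} [Fintype ι] (x : ι → ℝ) : ℝ :=
  if p = ∞ then ⨆ i, |x i| else (∑ i, |x i| ^ p.toReal) ^ (1 / p.toReal)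

/-- Flatten parameters into a vector of length `K·S`. -/
def flat {K S : ℕ} (h : Params K S) : Fin K × Fin S → ℝ := fun ki => h ki.1 ki.2

/-- The distance `d_p` between rescaling classes, via representatives in `hSdiag`. -/
noncomputable def dDist {K S : ℕ} (p : ℝ≥0∞) (h g : Params K S) : ℝ :=
  sInf ((fun pr : Params K S × Params K S => pnorm p (flat pr.1 - flat pr.2)) ''
    {pr | pr.1 ∈ CL h ∩ hSdiag K S ∧ pr.2 ∈ CL g ∩ hSdiag K S})

/-! Rescale `h` and `g` within their classes so that all components of `h` have sup norm
`μ = ‖P(h)‖^{1/K}` and all components of `g` have sup norm `‖P(g)‖^{1/K}`; by symmetry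
`‖P(g)‖ ≤ ‖P(h)‖`, so every entry of `g` is at most `μ` in modulus. Pick a multi-index `j` at which
every component of `h` attains its sup norm. Since `|P(h)_j| = ‖P(h)‖ > ‖P(h) - P(g)‖`, the entries
`P(h)_j` and `P(g)_j` have the same sign, so a change of signs of the components of `g` with
product `1` makes `h_{k,j_k}` and `g_{k,j_k}` of equal sign for every `k`. Writing `A`, `C` for the
products of the `h_{l,j_l}`, resp. `g_{l,j_l}`, over `l ≠ k`, the entry at `j` gives
`|C - A| ≤ δ / μ` and the entry at `j` with `k`-th index replaced by `i` gives
`|h_{k,i} A - g_{k,i} C| ≤ δ`, where `δ = ‖P(h) - P(g)‖`; hence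
`|h_{k,i} - g_{k,i}| ≤ 2 δ / μ^{K-1} = 2 ‖P(h)‖^{1/K-1} δ`. Passing from this entrywise bound to
the `ℓ^p` norm over the `KS` coordinates costs the factor `(KS)^{1/p}`, and `δ ≤ ‖P(h) - P(g)‖_q`.
-/

section Norms

variable {ι : Type*} [Fintype ι]

lemma pnorm_eq_norm_toLp (p : ℝ≥0∞) [Fact (1 ≤ p)] (x : ι → ℝ) :
    pnorm p x = ‖WithLp.toLp p x‖ := by
  rcases eq_or_ne p ∞ with rfl | hp
  · simp [pnorm, PiLp.norm_eq_ciSup]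
  · have hp₀ : p ≠ 0 := (zero_lt_one.trans_le Fact.out).ne'
    rw [pnorm, if_neg hp, PiLp.norm_eq_sum (ENNReal.toReal_pos hp₀ hp)]
    simp

lemma pnorm_top_eq_norm (x : ι → ℝ) : pnorm ∞ x = ‖x‖ := by
  simp [pnorm_eq_norm_toLp]

lemma supnorm_eq_norm {S : ℕ} (x : Fin S → ℝ) : supnorm x = ‖x‖ :=
  pnorm_top_eq_norm x

lemma pnorm_nonneg (p : ℝ≥0∞) (x : ι → ℝ) : 0 ≤ pnorm p x := by
  unfold pnorm
  split_ifs
  · exact Real.iSup_nonneg fun i => abs_nonneg _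
  · positivity

lemma norm_le_pnorm {q : ℝ≥0∞} (hq : 1 ≤ q) (x : ι → ℝ) : ‖x‖ ≤ pnorm q x := by
  have : Fact (1 ≤ q) := ⟨hq⟩
  rw [pnorm_eq_norm_toLp, pi_norm_le_iff_of_nonneg (norm_nonneg _)]
  exact fun i => PiLp.norm_apply_le (WithLp.toLp q x) i

lemma pnorm_le_card_rpow_mul_norm {p : ℝ≥0∞} (hp : 1 ≤ p) (x : ι → ℝ) :
    pnorm p x ≤ (Fintype.card ι : ℝ) ^ (1 / p.toReal) * ‖x‖ := by
  have : Fact (1 ≤ p) := ⟨hp⟩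
  rw [pnorm_eq_norm_toLp]
  have := (PiLp.lipschitzWith_toLp p (fun _ : ι => ℝ)).norm_le_mul (by simp) x
  simpa [ENNReal.toReal_div] using this

lemma exists_abs_eq_norm {x : ι → ℝ} (hx : x ≠ 0) : ∃ i, |x i| = ‖x‖ := by
  obtain ⟨i, -⟩ := Function.ne_iff.mp hx
  have : Nonempty ι := ⟨i⟩
  exact (IsGreatest.pi_norm x).1

end Norms

section Segre

variable {K S : ℕ}

lemma segre_smul (lam : Fin K → ℝ) (h : Params K S) :
    Segre (fun k => lam k • h k) = (∏ k, lam k) • Segre h := by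
  funext i
  simp [Segre, Finset.prod_mul_distrib]

lemma segre_eq_of_mem_CL {h g : Params K S} (hg : g ∈ CL h) : Segre g = Segre h := by
  obtain ⟨lam, hlam, hg⟩ := hg
  rw [show g = fun k => lam k • h k from funext hg, segre_smul, hlam, one_smul]

lemma mem_CL_trans {h g f : Params K S} (hg : g ∈ CL h) (hf : f ∈ CL g) : f ∈ CL h := by
  obtain ⟨lam, hlam, hg⟩ := hg
  obtain ⟨lam', hlam', hf⟩ := hf
  refine ⟨fun k => lam' k * lam k, by rw [Finset.prod_mul_distrib, hlam, hlam', one_mul],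
    fun k => ?_⟩
  rw [hf, hg, mul_smul]

lemma segre_update (h : Params K S) (j : Fin K → Fin S) (k : Fin K) (i : Fin S) :
    Segre h (Function.update j k i) = h k i * ∏ l ∈ univ.erase k, h l (j l) := by
  rw [Segre, ← Finset.mul_prod_erase univ _ (mem_univ k), Function.update_self]
  congr 1
  exact Finset.prod_congr rfl fun l hl => by rw [Function.update_of_ne (ne_of_mem_erase hl)]

lemma norm_segre (h : Params K S) : ‖Segre h‖ = ∏ k, ‖h k‖ := by
  refine le_antisymm ?_ ?_
  · refine (pi_norm_le_iff_of_nonneg (by positivity)).2 fun i => ?_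
    rw [Segre, Real.norm_eq_abs, Finset.abs_prod]
    exact Finset.prod_le_prod (fun k _ => abs_nonneg _) fun k _ => norm_le_pi_norm (h k) (i k)
  · by_cases hzero : ∀ k, h k ≠ 0
    · choose j hj using fun k => exists_abs_eq_norm (hzero k)
      calc ∏ k, ‖h k‖ = |Segre h j| := by simp_rw [Segre, Finset.abs_prod, hj]
        _ ≤ ‖Segre h‖ := norm_le_pi_norm (Segre h) j
    · obtain ⟨k, hk⟩ := not_forall_not.mp hzero
      rw [Finset.prod_eq_zero (mem_univ k) (by rw [hk, norm_zero])]
      exact norm_nonneg _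

lemma norm_segre_pos {h : Params K S} (hh : h ∈ hSstar K S) : 0 < ‖Segre h‖ := by
  rw [norm_segre]
  exact Finset.prod_pos fun k _ => norm_pos_iff.2 (hh k)

lemma mem_hSdiag_of_norm_eq {h : Params K S} {μ : ℝ} (hμ : 0 < μ) (hh : ∀ k, ‖h k‖ = μ) :
    h ∈ hSdiag K S :=
  ⟨fun k => norm_pos_iff.1 (hh k ▸ hμ),
    fun k k' => by rw [supnorm_eq_norm, supnorm_eq_norm, hh, hh]⟩

lemma exists_mem_CL_norm_eq (hK : K ≠ 0) {h : Params K S} (hh : h ∈ hSstar K S) :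
    ∃ h' ∈ CL h, ∀ k, ‖h' k‖ = ‖Segre h‖ ^ (1 / (K : ℝ)) := by
  set μ := ‖Segre h‖ ^ (1 / (K : ℝ))
  have hμK : μ ^ K = ‖Segre h‖ := by
    simp only [μ, one_div]
    exact Real.rpow_inv_natCast_pow (norm_nonneg _) hK
  have hnorm : ∀ k, 0 < ‖h k‖ := fun k => norm_pos_iff.2 (hh k)
  have hμ : 0 < μ := Real.rpow_pos_of_pos (norm_segre_pos hh) _
  refine ⟨fun k => (μ / ‖h k‖) • h k, ⟨fun k => μ / ‖h k‖, ?_, fun k => rfl⟩, fun k => ?_⟩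
  · rw [Finset.prod_div_distrib, Finset.prod_const, card_univ, Fintype.card_fin, ← norm_segre,
      hμK, div_self (norm_segre_pos hh).ne']
  · rw [norm_smul, Real.norm_of_nonneg (div_pos hμ (hnorm k)).le, div_mul_cancel₀ _ (hnorm k).ne']

end Segre

lemma mul_pos_of_abs_sub_lt_abs {x y : ℝ} (h : |x - y| < |x|) : 0 < x * y := by
  rcases abs_lt.1 h with ⟨h₁, h₂⟩
  rcases le_or_gt 0 x with hx | hx
  · rw [abs_of_nonneg hx] at h₁ h₂
    exact mul_pos (by linarith) (by linarith)
  · rw [abs_of_neg hx] at h₁ h₂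
    exact mul_pos_of_neg_of_neg hx (by linarith)

lemma abs_sub_le_of_mul_pos {A C : ℝ} (hAC : 0 < A * C) (hle : |C| ≤ |A|) :
    |C - A| ≤ |A| - |C| := by
  rcases mul_pos_iff.1 hAC with ⟨hA, hC⟩ | ⟨hA, hC⟩
  · rw [abs_of_pos hA, abs_of_pos hC] at *
    rw [abs_of_nonpos (by linarith)]
    linarith
  · rw [abs_of_neg hA, abs_of_neg hC] at *
    rw [abs_of_nonneg (by linarith)]
    linarith

lemma abs_sub_le_of_mul_sub {x y A C : ℝ} (hA : A ≠ 0) :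
    |x - y| ≤ (|x * A - y * C| + |y| * |C - A|) / |A| := by
  rw [le_div_iff₀ (abs_pos.2 hA), ← abs_mul, ← abs_mul]
  calc |(x - y) * A| = |(x * A - y * C) + y * (C - A)| := by ring_nf
    _ ≤ |x * A - y * C| + |y * (C - A)| := abs_add_le _ _

lemma Real.rpow_one_div_sub_one {M : ℝ} (hM : 0 < M) {K : ℕ} (hK : K ≠ 0) :
    M ^ (1 / (K : ℝ) - 1) = ((M ^ (1 / (K : ℝ))) ^ (K - 1))⁻¹ := by
  rw [← Real.rpow_natCast, ← Real.rpow_mul hM.le, ← Real.rpow_neg hM.le,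
    Nat.cast_sub (Nat.one_le_iff_ne_zero.2 hK)]
  congr 1
  field_simp
  ring

section Estimate

variable {K S : ℕ}

lemma exists_mem_CL_aligned {g : Params K S} (a : Fin K → ℝ) (j : Fin K → Fin S)
    (hpos : 0 < (∏ k, a k) * ∏ k, g k (j k)) :
    ∃ g' ∈ CL g, (∀ k, ‖g' k‖ = ‖g k‖) ∧ ∀ k, 0 < a k * g' k (j k) := by
  set x : Fin K → ℝ := fun k => a k * g k (j k)
  have hx : 0 < ∏ k, x k := by rwa [Finset.prod_mul_distrib]
  have hx0 : ∀ k, x k ≠ 0 := fun k h0 => hx.ne' (Finset.prod_eq_zero (mem_univ k) h0)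
  refine ⟨fun k => (|x k| / x k) • g k, ⟨fun k => |x k| / x k, ?_, fun k => rfl⟩,
    fun k => ?_, fun k => ?_⟩
  · rw [Finset.prod_div_distrib, ← Finset.abs_prod, abs_of_pos hx, div_self hx.ne']
  · rw [norm_smul, Real.norm_eq_abs, abs_div, abs_abs, div_self (abs_ne_zero.2 (hx0 k)), one_mul]
  · calc 0 < |x k| := abs_pos.2 (hx0 k)
      _ = |x k| / x k * x k := (div_mul_cancel₀ _ (hx0 k)).symm
      _ = a k * ((|x k| / x k) • g k) (j k) := by
        simp only [Pi.smul_apply, smul_eq_mul, x]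
        ring

lemma abs_sub_le_of_segre_close {h g : Params K S} (j : Fin K → Fin S) {μ δ : ℝ} (hμ : 0 < μ)
    (hh : ∀ l, |h l (j l)| = μ) (hg : ∀ l, ‖g l‖ ≤ μ) (hpos : ∀ l, 0 < h l (j l) * g l (j l))
    (hδ : ∀ i, |Segre h i - Segre g i| ≤ δ) (k : Fin K) (i : Fin S) :
    |h k i - g k i| ≤ 2 * δ / μ ^ (K - 1) := by
  set A := ∏ l ∈ univ.erase k, h l (j l)
  set C := ∏ l ∈ univ.erase k, g l (j l)
  have hgj : ∀ l i, |g l i| ≤ μ := fun l i => (norm_le_pi_norm (g l) i).trans (hg l)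
  have hcard : (univ.erase k).card = K - 1 := by
    rw [card_erase_of_mem (mem_univ k), card_univ, Fintype.card_fin]
  have hA : |A| = μ ^ (K - 1) := by
    rw [Finset.abs_prod, Finset.prod_congr rfl fun l _ => hh l, Finset.prod_const, hcard]
  have hCA : |C| ≤ |A| :=
    calc |C| = ∏ l ∈ univ.erase k, |g l (j l)| := Finset.abs_prod _ _
      _ ≤ ∏ l ∈ univ.erase k, μ :=
        Finset.prod_le_prod (fun l _ => abs_nonneg _) fun l _ => hgj l (j l)
      _ = |A| := by rw [Finset.prod_const, hcard, hA]
  have hAC : 0 < A * C := by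
    rw [← Finset.prod_mul_distrib]
    exact Finset.prod_pos fun l _ => hpos l
  have hA0 : A ≠ 0 := left_ne_zero_of_mul hAC.ne'
  have hdiag : μ * |A| - δ ≤ μ * |C| := by
    have hj := hδ j
    rw [← Function.update_eq_self k j, segre_update, segre_update] at hj
    calc μ * |A| - δ = |h k (j k) * A| - δ := by rw [abs_mul, hh]
      _ ≤ |g k (j k) * C| := by linarith [abs_sub_abs_le_abs_sub (h k (j k) * A) (g k (j k) * C)]
      _ ≤ μ * |C| := by rw [abs_mul]; exact mul_le_mul_of_nonneg_right (hgj k (j k)) (abs_nonneg _)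
  have hentry : |h k i * A - g k i * C| ≤ δ := by
    simpa only [segre_update] using hδ (Function.update j k i)
  calc |h k i - g k i| ≤ (|h k i * A - g k i * C| + |g k i| * |C - A|) / |A| :=
        abs_sub_le_of_mul_sub hA0
    _ ≤ (δ + μ * (δ / μ)) / |A| := by
        gcongr
        · exact hgj k i
        · rw [le_div_iff₀ hμ]
          linarith [mul_le_mul_of_nonneg_left (abs_sub_le_of_mul_pos hAC hCA) hμ.le]
    _ = 2 * δ / μ ^ (K - 1) := by
        rw [hA, mul_div_cancel₀ _ hμ.ne']
        ring

end Estimate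

section Representatives

variable {K S : ℕ}

lemma exists_reps_abs_sub_le (hK : K ≠ 0) {h g : Params K S} (hh : h ∈ hSstar K S)
    (hg : g ∈ hSstar K S) (hle : ‖Segre g‖ ≤ ‖Segre h‖)
    (hδ : ‖Segre h - Segre g‖ < ‖Segre h‖) :
    ∃ h' ∈ CL h ∩ hSdiag K S, ∃ g' ∈ CL g ∩ hSdiag K S, ∀ k i,
      |h' k i - g' k i| ≤ 2 * ‖Segre h‖ ^ (1 / (K : ℝ) - 1) * ‖Segre h - Segre g‖ := by
  obtain ⟨h', hh'CL, hh'norm⟩ := exists_mem_CL_norm_eq hK hh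
  obtain ⟨g₀, hg₀CL, hg₀norm⟩ := exists_mem_CL_norm_eq hK hg
  set μ := ‖Segre h‖ ^ (1 / (K : ℝ))
  have hμ : 0 < μ := Real.rpow_pos_of_pos (norm_segre_pos hh) _
  have hν : 0 < ‖Segre g‖ ^ (1 / (K : ℝ)) := Real.rpow_pos_of_pos (norm_segre_pos hg) _
  have hνμ : ‖Segre g‖ ^ (1 / (K : ℝ)) ≤ μ := Real.rpow_le_rpow (norm_nonneg _) hle (by positivity)
  choose j hj using fun k => exists_abs_eq_norm (norm_pos_iff.1 (hh'norm k ▸ hμ))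
  have hSh' : Segre h' = Segre h := segre_eq_of_mem_CL hh'CL
  have hSg₀ : Segre g₀ = Segre g := segre_eq_of_mem_CL hg₀CL
  have hentry : ∀ i, |Segre h i - Segre g i| ≤ ‖Segre h - Segre g‖ :=
    fun i => norm_le_pi_norm (Segre h - Segre g) i
  have hmax : |Segre h j| = ‖Segre h‖ := by
    rw [← hSh', norm_segre, Segre, Finset.abs_prod]
    exact Finset.prod_congr rfl fun k _ => hj k
  obtain ⟨g', hg'CL, hg'norm, hg'pos⟩ := exists_mem_CL_aligned (fun k => h' k (j k)) j
    (mul_pos_of_abs_sub_lt_abs (x := Segre h' j) (y := Segre g₀ j)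
      (by rw [hSh', hSg₀, hmax]; exact (hentry j).trans_lt hδ))
  have hg'μ : ∀ k, ‖g' k‖ = ‖Segre g‖ ^ (1 / (K : ℝ)) := fun k => (hg'norm k).trans (hg₀norm k)
  refine ⟨h', ⟨hh'CL, mem_hSdiag_of_norm_eq hμ hh'norm⟩,
    g', ⟨mem_CL_trans hg₀CL hg'CL, mem_hSdiag_of_norm_eq hν hg'μ⟩, fun k i => ?_⟩
  have hSg' : Segre g' = Segre g := (segre_eq_of_mem_CL hg'CL).trans hSg₀
  calc |h' k i - g' k i| ≤ 2 * ‖Segre h - Segre g‖ / μ ^ (K - 1) :=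
        abs_sub_le_of_segre_close j hμ (fun k => (hj k).trans (hh'norm k))
          (fun k => (hg'μ k).trans_le hνμ) hg'pos (by rwa [hSh', hSg']) k i
    _ = 2 * ‖Segre h‖ ^ (1 / (K : ℝ) - 1) * ‖Segre h - Segre g‖ := by
        rw [Real.rpow_one_div_sub_one (norm_segre_pos hh) hK]
        ring

lemma exists_reps_abs_sub_le_min (hK : K ≠ 0) {h g : Params K S} (hh : h ∈ hSstar K S)
    (hg : g ∈ hSstar K S) (hδ : ‖Segre h - Segre g‖ < max ‖Segre h‖ ‖Segre g‖) :
    ∃ h' ∈ CL h ∩ hSdiag K S, ∃ g' ∈ CL g ∩ hSdiag K S, ∀ k i,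
      |h' k i - g' k i| ≤ 2 * min (‖Segre h‖ ^ (1 / (K : ℝ) - 1)) (‖Segre g‖ ^ (1 / (K : ℝ) - 1)) *
        ‖Segre h - Segre g‖ := by
  have he : 1 / (K : ℝ) - 1 ≤ 0 :=
    sub_nonpos.2 (div_le_one_of_le₀ (by exact_mod_cast Nat.one_le_iff_ne_zero.2 hK) (by positivity))
  rcases le_total ‖Segre g‖ ‖Segre h‖ with hle | hle
  · rw [max_eq_left hle] at hδ
    rw [min_eq_left (Real.rpow_le_rpow_of_nonpos (norm_segre_pos hg) hle he)]
    exact exists_reps_abs_sub_le hK hh hg hle hδ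
  · rw [max_eq_right hle, norm_sub_rev] at hδ
    rw [min_eq_right (Real.rpow_le_rpow_of_nonpos (norm_segre_pos hh) hle he), norm_sub_rev]
    obtain ⟨g', hg', h', hh', hbound⟩ := exists_reps_abs_sub_le hK hg hh hle hδ
    exact ⟨h', hh', g', hg', fun k i => abs_sub_comm (h' k i) (g' k i) ▸ hbound k i⟩

lemma dDist_le_pnorm (p : ℝ≥0∞) {h g h' g' : Params K S} (hh' : h' ∈ CL h ∩ hSdiag K S)
    (hg' : g' ∈ CL g ∩ hSdiag K S) : dDist p h g ≤ pnorm p (flat h' - flat g') :=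
  csInf_le ⟨0, by rintro _ ⟨pr, -, rfl⟩; exact pnorm_nonneg _ _⟩ ⟨(h', g'), ⟨hh', hg'⟩, rfl⟩

end Representatives

theorem segre_stable_identifiability_general {K S : ℕ} (hK : 1 ≤ K)
    (h g : Params K S) (hh : h ∈ hSstar K S) (hg : g ∈ hSstar K S)
    (hclose : pnorm ⊤ (Segre g - Segre h) ≤
      (1 / 2) * max (pnorm ⊤ (Segre h)) (pnorm ⊤ (Segre g))) :
    ∀ p q : ℝ≥0∞, 1 ≤ p → 1 ≤ q →
      dDist p h g ≤
        7 * ((K * S : ℕ) : ℝ) ^ ((1 : ℝ) / p.toReal) *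
          min ((pnorm ⊤ (Segre h)) ^ ((1 : ℝ) / (K : ℝ) - 1))
              ((pnorm ⊤ (Segre g)) ^ ((1 : ℝ) / (K : ℝ) - 1)) *
          pnorm q (Segre h - Segre g) := by
  intro p q hp hq
  simp only [pnorm_top_eq_norm] at hclose ⊢
  have hδ : ‖Segre h - Segre g‖ < max ‖Segre h‖ ‖Segre g‖ := by
    rw [norm_sub_rev]
    linarith [norm_segre_pos hh, le_max_left ‖Segre h‖ ‖Segre g‖]
  obtain ⟨h', hh', g', hg', hbound⟩ := exists_reps_abs_sub_le_min (by omega) hh hg hδ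
  set m := min (‖Segre h‖ ^ (1 / (K : ℝ) - 1)) (‖Segre g‖ ^ (1 / (K : ℝ) - 1))
  have hm : 0 ≤ m := le_min (by positivity) (by positivity)
  calc dDist p h g ≤ pnorm p (flat h' - flat g') := dDist_le_pnorm p hh' hg'
    _ ≤ ((K * S : ℕ) : ℝ) ^ (1 / p.toReal) * (2 * m * ‖Segre h - Segre g‖) := by
        refine (pnorm_le_card_rpow_mul_norm hp _).trans ?_
        rw [Fintype.card_prod, Fintype.card_fin, Fintype.card_fin]
        gcongr
        exact (pi_norm_le_iff_of_nonneg (by positivity)).2 fun ki => hbound ki.1 ki.2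
    _ ≤ ((K * S : ℕ) : ℝ) ^ (1 / p.toReal) * (7 * m * pnorm q (Segre h - Segre g)) := by
        gcongr
        · norm_num
        · exact norm_le_pnorm hq _
    _ = 7 * ((K * S : ℕ) : ℝ) ^ (1 / p.toReal) * m * pnorm q (Segre h - Segre g) := by ring

/-- stable recovery of the class `CL(h)` from the Segre tensor `P(h)`. -/
theorem segre_stable_identifiability {K S : ℕ} (hK : 1 ≤ K) (hS : 2 ≤ S)
    (h g : Params K S) (hh : h ∈ hSstar K S) (hg : g ∈ hSstar K S)
    (hclose : pnorm ⊤ (Segre g - Segre h) ≤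
      (1 / 2) * max (pnorm ⊤ (Segre h)) (pnorm ⊤ (Segre g))) :
    ∀ p q : ℝ≥0∞, 1 ≤ p → 1 ≤ q →
      dDist p h g ≤
        7 * ((K * S : ℕ) : ℝ) ^ ((1 : ℝ) / p.toReal) *
          min ((pnorm ⊤ (Segre h)) ^ ((1 : ℝ) / (K : ℝ) - 1))
              ((pnorm ⊤ (Segre g)) ^ ((1 : ℝ) / (K : ℝ) - 1)) *
          pnorm q (Segre h - Segre g) :=
  segre_stable_identifiability_general hK h g hh hg hclose
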